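/- arXiv:1403.1183 — 3 statements merged into one kernel-verified Lean document; each statement's English description precedes it below -/
import Mathlib

section
/- For a > 0 and μ ∈ ℝ, σ > 0, letting γ = 2μ/σ², the limits lim_{λ→0+} b_λ and lim_{λ→0+} c_λ both equal γ/(e^{γa} - 1) when μ ≠ 0, and both equal 1/a when μ = 0. -/
/-!
By Vieta, `β⁺ + β⁻ = -γ` and `β⁺ β⁻ = -2λ/σ²`, so at `λ = 0` the roots are `0` and `-γ`.
For `μ ≠ 0` these are distinct, the denominators of `b_λ` and `c_λ` stay away from `0`, and both
limits are obtained by continuity, evaluating at `(β⁺, β⁻) = (0, -γ)` (both expressions are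
symmetric in `β⁺, β⁻`). For `μ = 0` we have `β⁻ = -β⁺` and `β⁺ → 0⁺`, so with `s = β⁺`,
`c_λ = s / sinh (s a) → 1 / a`, and then `b_λ = β⁻ + c_λ e^{-β⁻ a} → 1 / a` as well.
-/

open Real Filter Topology

noncomputable def betaPlus (μ σ lam : ℝ) : ℝ :=
  (-μ + sqrt (μ ^ 2 + 2 * lam * σ ^ 2)) / σ ^ 2

noncomputable def betaMinus (μ σ lam : ℝ) : ℝ :=
  (-μ - sqrt (μ ^ 2 + 2 * lam * σ ^ 2)) / σ ^ 2

noncomputable def bCoeff (a x y : ℝ) : ℝ :=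
  (x * exp (-y * a) - y * exp (-x * a)) / (exp (-y * a) - exp (-x * a))

noncomputable def cCoeff (a x y : ℝ) : ℝ :=
  (x - y) / (exp (-y * a) - exp (-x * a))

section Roots

variable (μ σ lam : ℝ)

theorem continuous_betaPlus : Continuous (betaPlus μ σ) := by
  unfold betaPlus
  fun_prop

theorem continuous_betaMinus : Continuous (betaMinus μ σ) := by
  unfold betaMinus
  fun_prop

theorem betaPlus_add_betaMinus : betaPlus μ σ lam + betaMinus μ σ lam = -(2 * μ / σ ^ 2) := by
  unfold betaPlus betaMinus
  ring

theorem betaPlus_mul_betaMinus {μ σ lam : ℝ} (hσ : σ ≠ 0) (h : 0 ≤ μ ^ 2 + 2 * lam * σ ^ 2) :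
    betaPlus μ σ lam * betaMinus μ σ lam = -(2 * lam / σ ^ 2) := by
  unfold betaPlus betaMinus
  field_simp
  linear_combination -sq_sqrt h

theorem betaMinus_zero_left : betaMinus 0 σ lam = -betaPlus 0 σ lam :=
  eq_neg_of_add_eq_zero_right (by simpa using betaPlus_add_betaMinus 0 σ lam)

theorem tendsto_betaPlus_zero_left {σ : ℝ} (hσ : σ ≠ 0) :
    Tendsto (betaPlus 0 σ) (𝓝[>] 0) (𝓝[≠] 0) := by
  refine tendsto_nhdsWithin_iff.2 ⟨?_, ?_⟩
  · simpa [betaPlus] using ((continuous_betaPlus 0 σ).tendsto 0).mono_left nhdsWithin_le_nhds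
  · filter_upwards [self_mem_nhdsWithin] with lam (hlam : 0 < lam)
    refine left_ne_zero_of_mul (b := betaMinus 0 σ lam) ?_
    rw [betaPlus_mul_betaMinus hσ (by positivity)]
    exact neg_ne_zero.2 (by positivity)

end Roots

section Coefficients

variable {a x y : ℝ}

theorem exp_neg_mul_sub_exp_neg_mul_ne_zero (ha : a ≠ 0) (hxy : x ≠ y) :
    exp (-y * a) - exp (-x * a) ≠ 0 := by
  rw [sub_ne_zero, Ne, exp_eq_exp, mul_left_inj' ha, neg_inj]
  exact hxy.symm

theorem bCoeff_comm (a x y : ℝ) : bCoeff a x y = bCoeff a y x := by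
  rw [bCoeff, bCoeff, ← neg_div_neg_eq, neg_sub, neg_sub]

theorem cCoeff_comm (a x y : ℝ) : cCoeff a x y = cCoeff a y x := by
  rw [cCoeff, cCoeff, ← neg_div_neg_eq, neg_sub, neg_sub]

theorem bCoeff_zero_neg (a γ : ℝ) : bCoeff a 0 (-γ) = γ / (exp (γ * a) - 1) := by
  simp [bCoeff]

theorem cCoeff_zero_neg (a γ : ℝ) : cCoeff a 0 (-γ) = γ / (exp (γ * a) - 1) := by
  simp [cCoeff]

theorem bCoeff_eq_add_cCoeff_mul (ha : a ≠ 0) (hxy : x ≠ y) :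
    bCoeff a x y = y + cCoeff a x y * exp (-y * a) := by
  rw [bCoeff, cCoeff, div_mul_eq_mul_div,
    add_div' _ _ _ (exp_neg_mul_sub_exp_neg_mul_ne_zero ha hxy)]
  congr 1
  ring

theorem bCoeff_of_add_eq_of_mul_eq_zero {p m γ : ℝ} (hadd : p + m = -γ) (hmul : p * m = 0) :
    bCoeff a p m = γ / (exp (γ * a) - 1) := by
  rcases mul_eq_zero.1 hmul with rfl | rfl
  · rw [zero_add] at hadd
    rw [hadd, bCoeff_zero_neg]
  · rw [add_zero] at hadd
    rw [hadd, bCoeff_comm, bCoeff_zero_neg]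

theorem cCoeff_of_add_eq_of_mul_eq_zero {p m γ : ℝ} (hadd : p + m = -γ) (hmul : p * m = 0) :
    cCoeff a p m = γ / (exp (γ * a) - 1) := by
  rcases mul_eq_zero.1 hmul with rfl | rfl
  · rw [zero_add] at hadd
    rw [hadd, cCoeff_zero_neg]
  · rw [add_zero] at hadd
    rw [hadd, cCoeff_comm, cCoeff_zero_neg]

variable {α : Type*} {l : Filter α} {f g : α → ℝ} {p m : ℝ}

theorem tendsto_bCoeff (ha : a ≠ 0) (hpm : p ≠ m) (hf : Tendsto f l (𝓝 p))
    (hg : Tendsto g l (𝓝 m)) :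
    Tendsto (fun t => bCoeff a (f t) (g t)) l (𝓝 (bCoeff a p m)) :=
  ((hf.mul (hg.neg.mul_const a).rexp).sub (hg.mul (hf.neg.mul_const a).rexp)).div
    ((hg.neg.mul_const a).rexp.sub (hf.neg.mul_const a).rexp)
    (exp_neg_mul_sub_exp_neg_mul_ne_zero ha hpm)

theorem tendsto_cCoeff (ha : a ≠ 0) (hpm : p ≠ m) (hf : Tendsto f l (𝓝 p))
    (hg : Tendsto g l (𝓝 m)) :
    Tendsto (fun t => cCoeff a (f t) (g t)) l (𝓝 (cCoeff a p m)) :=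
  (hf.sub hg).div ((hg.neg.mul_const a).rexp.sub (hf.neg.mul_const a).rexp)
    (exp_neg_mul_sub_exp_neg_mul_ne_zero ha hpm)

theorem tendsto_cCoeff_self_neg (ha : a ≠ 0) :
    Tendsto (fun s => cCoeff a s (-s)) (𝓝[≠] 0) (𝓝 a⁻¹) := by
  have hsinh : HasDerivAt (fun s => sinh (s * a)) a 0 := by
    simpa using ((hasDerivAt_id (0 : ℝ)).mul_const a).sinh
  refine ((hasDerivAt_iff_tendsto_slope_zero.mp hsinh).inv₀ ha).congr fun s => ?_
  simp only [smul_eq_mul, zero_add, zero_mul, sinh_zero, sub_zero]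
  rw [mul_inv, inv_inv, sinh_eq, inv_div, cCoeff, neg_mul, neg_mul, neg_neg]
  ring

theorem tendsto_bCoeff_self_neg (ha : a ≠ 0) :
    Tendsto (fun s => bCoeff a s (-s)) (𝓝[≠] 0) (𝓝 a⁻¹) := by
  have hlim : Tendsto (fun s => -s + cCoeff a s (-s) * exp (-(-s) * a)) (𝓝[≠] 0)
      (𝓝 (-0 + a⁻¹ * exp (-(-0) * a))) :=
    (tendsto_nhdsWithin_of_tendsto_nhds tendsto_id).neg.add
      ((tendsto_cCoeff_self_neg ha).mul
        ((tendsto_nhdsWithin_of_tendsto_nhds tendsto_id).neg.neg.mul_const a).rexp)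
  rw [neg_zero, neg_zero, zero_add, zero_mul, exp_zero, mul_one] at hlim
  refine hlim.congr' ?_
  filter_upwards [self_mem_nhdsWithin] with s hs
  exact (bCoeff_eq_add_cCoeff_mul ha (neg_ne_self.mpr hs).symm).symm

end Coefficients

theorem stmt_3 (μ σ a γ : ℝ) (hσ : 0 < σ) (ha : 0 < a) (hγ : γ = 2 * μ / σ ^ 2)
    (βp βm b c : ℝ → ℝ)
    (hβp : ∀ lam, βp lam = (-μ + Real.sqrt (μ ^ 2 + 2 * lam * σ ^ 2)) / σ ^ 2)
    (hβm : ∀ lam, βm lam = (-μ - Real.sqrt (μ ^ 2 + 2 * lam * σ ^ 2)) / σ ^ 2)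
    (hb : ∀ lam, b lam = (βp lam * Real.exp (-(βm lam) * a) - βm lam * Real.exp (-(βp lam) * a)) /
      (Real.exp (-(βm lam) * a) - Real.exp (-(βp lam) * a)))
    (hc : ∀ lam, c lam = (βp lam - βm lam) /
      (Real.exp (-(βm lam) * a) - Real.exp (-(βp lam) * a))) :
    (μ ≠ 0 →
      Tendsto b (nhdsWithin 0 (Set.Ioi 0)) (nhds (γ / (Real.exp (γ * a) - 1))) ∧
      Tendsto c (nhdsWithin 0 (Set.Ioi 0)) (nhds (γ / (Real.exp (γ * a) - 1)))) ∧
    (μ = 0 →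
      Tendsto b (nhdsWithin 0 (Set.Ioi 0)) (nhds (1 / a)) ∧
      Tendsto c (nhdsWithin 0 (Set.Ioi 0)) (nhds (1 / a))) := by
  obtain rfl : βp = betaPlus μ σ := funext hβp
  obtain rfl : βm = betaMinus μ σ := funext hβm
  obtain rfl : b = fun lam => bCoeff a (betaPlus μ σ lam) (betaMinus μ σ lam) := funext hb
  obtain rfl : c = fun lam => cCoeff a (betaPlus μ σ lam) (betaMinus μ σ lam) := funext hc
  have hsum := betaPlus_add_betaMinus μ σ 0
  have hprod := betaPlus_mul_betaMinus hσ.ne' (by positivity : 0 ≤ μ ^ 2 + 2 * 0 * σ ^ 2)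
  rw [← hγ] at hsum
  rw [mul_zero, zero_div, neg_zero] at hprod
  refine ⟨fun hμ => ?_, fun hμ => ?_⟩
  · have hγ0 : γ ≠ 0 := hγ ▸ div_ne_zero (mul_ne_zero two_ne_zero hμ) (pow_pos hσ 2).ne'
    have hpm : betaPlus μ σ 0 ≠ betaMinus μ σ 0 := fun h => hγ0 <| by
      rw [h, mul_self_eq_zero] at hprod
      linarith
    have hp := (continuous_betaPlus μ σ).continuousWithinAt (s := Set.Ioi 0) (x := 0)
    have hm := (continuous_betaMinus μ σ).continuousWithinAt (s := Set.Ioi 0) (x := 0)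
    exact ⟨bCoeff_of_add_eq_of_mul_eq_zero hsum hprod ▸ tendsto_bCoeff ha.ne' hpm hp hm,
      cCoeff_of_add_eq_of_mul_eq_zero hsum hprod ▸ tendsto_cCoeff ha.ne' hpm hp hm⟩
  · subst hμ
    have hlim := tendsto_betaPlus_zero_left hσ.ne'
    simp only [betaMinus_zero_left, one_div]
    exact ⟨(tendsto_bCoeff_self_neg ha.ne').comp hlim, (tendsto_cCoeff_self_neg ha.ne').comp hlim⟩
end

section
/- Fix θ > 0. The function p(m) = θ(θ + θm)^{m-1}e^{-θ-θm}/m! = (m+1)^{m-1}θ^m e^{-(m+1)θ}/m! defines a probability mass function on ℕ, i.e., ∑_{m=0}^∞ (m+1)^{m-1} θ^m e^{-(m+1)θ}/m! = 1, provided θ ≤ 1. -/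
/-!
Put `x = θ e^{-θ}` and `F(x) = ∑ (m+1)^{m-1} x^m / m!`, so that the sum is `e^{-θ} F(x)`.
Abel's identity `∑ₖ C(n,k) (k+1)^{k-1} (y-k)^{n-k} = (y+1)^n`, taken at `y = n+1`, is the
coefficient form of `F · ∑ (m+1)^m x^m / m! = F'`, that is `F (F + x F') = F'` for `|x| < 1/e`.
Consequently `u(θ) = e^{-θ} F(θ e^{-θ}) - 1` satisfies the linear equation
`u' = e^{-θ} (F + x F') u` with `u(0) = 0`, and Grönwall gives `u = 0` on `[0, 1)`. Then
`F(θ e^{-θ}) = e^θ ≤ e` for `θ < 1` bounds the partial sums of `F` at `x = 1/e` by `e`, so the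
series converges there and continuity extends the identity to `θ = 1`.
-/

open Real Finset Filter
open scoped Nat

lemma hasDerivAt_sum_choose_mul_sub_pow (w : ℕ → ℝ) (n : ℕ) (y : ℝ) :
    HasDerivAt
      (fun y => ∑ k ∈ range (n + 2), ((n + 1).choose k : ℝ) * w k * (y - k) ^ (n + 1 - k))
      ((n + 1) * ∑ k ∈ range (n + 1), (n.choose k : ℝ) * w k * (y - k) ^ (n - k)) y := by
  have hterm : ∀ k ∈ range (n + 2), HasDerivAt
      (fun y => ((n + 1).choose k : ℝ) * w k * (y - k) ^ (n + 1 - k))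
      (((n + 1).choose k : ℝ) * w k * ((n + 1 - k : ℕ) * (y - k) ^ (n + 1 - k - 1) * 1)) y :=
    fun k _ => (((hasDerivAt_id y).sub_const (k : ℝ)).pow (n + 1 - k)).const_mul _
  refine (HasDerivAt.fun_sum hterm).congr_deriv ?_
  rw [sum_range_succ, Nat.sub_self, Nat.cast_zero, mul_sum]
  simp only [zero_mul, mul_zero, add_zero, mul_one]
  refine sum_congr rfl fun k hk => ?_
  have hk : k ≤ n := Nat.lt_succ_iff.mp (mem_range.mp hk)
  have hchoose : ((n.choose k * (n + 1) : ℕ) : ℝ) = ((n + 1).choose k * (n + 1 - k) : ℕ) :=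
    congrArg _ (Nat.choose_mul_succ_eq n k)
  push_cast at hchoose
  rw [show n + 1 - k - 1 = n - k by omega]
  linear_combination (-(w k * (y - k) ^ (n - k))) * hchoose

lemma sum_choose_mul_add_one_pow_mul_neg_one_sub_pow {n : ℕ} (hn : n ≠ 0) :
    ∑ k ∈ range (n + 1), (n.choose k : ℝ) * ((k : ℝ) + 1) ^ (k - 1) * (-1 - k) ^ (n - k)
      = 0 := by
  have hdiff := congrFun (fwdDiff_iter_pow_eq_zero_of_lt (R := ℝ)
    (Nat.sub_lt (Nat.pos_of_ne_zero hn) one_pos)) 1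
  rw [fwdDiff_iter_eq_sum_shift, Pi.zero_apply] at hdiff
  rw [← hdiff]
  refine sum_congr rfl fun k hk => ?_
  have hk : k ≤ n := Nat.lt_succ_iff.mp (mem_range.mp hk)
  have hpow : ((k : ℝ) + 1) ^ (k - 1) * ((k : ℝ) + 1) ^ (n - k)
      = ((k : ℝ) + 1) ^ (n - 1) := by
    rcases k with _ | k
    · simp
    · rw [← pow_add]; congr 1; omega
  rw [show (-1 - k : ℝ) = (-1) * (k + 1) by ring, mul_pow]
  simp only [zsmul_eq_mul, nsmul_eq_mul, Int.cast_mul, Int.cast_pow, Int.cast_neg, Int.cast_one,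
    Int.cast_natCast, mul_one]
  rw [add_comm (1 : ℝ)]
  linear_combination ((-1) ^ (n - k) * (n.choose k : ℝ)) * hpow

/-- Abel's binomial identity at `x = 1`. -/
theorem sum_choose_mul_add_one_pow_mul_sub_pow (n : ℕ) (y : ℝ) :
    ∑ k ∈ range (n + 1), (n.choose k : ℝ) * ((k : ℝ) + 1) ^ (k - 1) * (y - k) ^ (n - k)
      = (y + 1) ^ n := by
  induction n generalizing y with
  | zero => simp
  | succ n ih =>
    have hderiv : ∀ z, HasDerivAt (fun y => ∑ k ∈ range (n + 2), ((n + 1).choose k : ℝ)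
        * ((k : ℝ) + 1) ^ (k - 1) * (y - k) ^ (n + 1 - k) - (y + 1) ^ (n + 1)) 0 z := by
      intro z
      have h := (hasDerivAt_sum_choose_mul_sub_pow (fun k => ((k : ℝ) + 1) ^ (k - 1)) n z).sub
        (((hasDerivAt_id z).add_const 1).pow (n + 1))
      simp only [ih, id, Nat.add_sub_cancel, Nat.cast_add, Nat.cast_one, mul_one, sub_self] at h
      exact h
    have hconst := is_const_of_deriv_eq_zero (fun z => (hderiv z).differentiableAt)
      (fun z => (hderiv z).deriv) y (-1)
    simp only [sum_choose_mul_add_one_pow_mul_neg_one_sub_pow n.succ_ne_zero] at hconst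
    rw [neg_add_cancel, zero_pow n.succ_ne_zero] at hconst
    linarith

section PowerSeries

variable {c : ℕ → ℝ} {C ρ x : ℝ}

lemma summable_norm_mul_pow_of_abs_le (hρ : 0 ≤ ρ) (hc : ∀ m, |c m| ≤ C * ρ ^ m)
    (hx : ρ * |x| < 1) : Summable fun m => ‖c m * x ^ m‖ := by
  refine .of_nonneg_of_le (fun m => norm_nonneg _) (fun m => ?_)
    ((summable_geometric_of_lt_one (by positivity) hx).mul_left C)
  rw [norm_mul, norm_pow, Real.norm_eq_abs, Real.norm_eq_abs, mul_pow, ← mul_assoc]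
  exact mul_le_mul_of_nonneg_right (hc m) (by positivity)

lemma hasDerivAt_tsum_mul_pow (hρ : 0 ≤ ρ) (hc : ∀ m, |c m| ≤ C * ρ ^ m)
    (hx : ρ * |x| < 1) :
    HasDerivAt (fun y => ∑' m, c m * y ^ m) (∑' m, m * c m * x ^ (m - 1)) x := by
  obtain ⟨r, hxr, hr⟩ : ∃ r, |x| < r ∧ ρ * r < 1 := by
    refine ⟨|x| + (1 - ρ * |x|) / (ρ + 1),
      lt_add_of_pos_right _ (by apply div_pos <;> linarith), ?_⟩
    rw [mul_add, mul_div_assoc', ← lt_sub_iff_add_lt', div_lt_iff₀ (by linarith)]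
    nlinarith
  have hr0 : 0 < r := (abs_nonneg x).trans_lt hxr
  have hC : 0 ≤ C := by simpa using (abs_nonneg _).trans (hc 0)
  have hu : Summable fun m : ℕ => C / r * (m * (ρ * r) ^ m) := by
    refine .mul_left _ ?_
    simpa using summable_pow_mul_geometric_of_norm_lt_one 1
      (show ‖ρ * r‖ < 1 by rwa [Real.norm_of_nonneg (by positivity)])
  refine hasDerivAt_tsum_of_isPreconnected (g := fun m y => c m * y ^ m)
    (g' := fun m y => m * c m * y ^ (m - 1)) hu Metric.isOpen_ball
    (convex_ball (0 : ℝ) r).isPreconnected (fun m y _ => ?_) (fun m y hy => ?_)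
    (Metric.mem_ball_self hr0) ?_ (by rwa [mem_ball_zero_iff, Real.norm_eq_abs])
  · simpa [mul_comm, mul_assoc] using (hasDerivAt_pow m y).const_mul (c m)
  · rw [mem_ball_zero_iff, Real.norm_eq_abs] at hy
    rcases m with _ | m
    · simp
    · rw [Real.norm_eq_abs, abs_mul, abs_mul, abs_pow, Nat.add_sub_cancel, Nat.abs_cast]
      calc ((m + 1 : ℕ) : ℝ) * |c (m + 1)| * |y| ^ m
          ≤ (m + 1 : ℕ) * (C * ρ ^ (m + 1)) * r ^ m := by gcongr; exact hc _
        _ = C / r * ((m + 1 : ℕ) * (ρ * r) ^ (m + 1)) := by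
          field_simp
          ring
  · exact (summable_norm_mul_pow_of_abs_le (x := 0) hρ hc (by simp)).of_norm

lemma tsum_mul_pow_le_tsum_mul_pow {a : ℕ → ℝ} {x y : ℝ} (ha : ∀ m, 0 ≤ a m)
    (hy : Summable fun m => a m * y ^ m) (hx : 0 ≤ x) (hxy : x ≤ y) :
    ∑' m, a m * x ^ m ≤ ∑' m, a m * y ^ m :=
  have hle : ∀ m, a m * x ^ m ≤ a m * y ^ m := fun m => by gcongr; exact ha m
  (hy.of_nonneg_of_le (fun m => by have := ha m; positivity) hle).tsum_le_tsum hle hy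

end PowerSeries

lemma mul_exp_neg_lt_exp_neg_one {s : ℝ} (hs : s ≠ 1) : s * exp (-s) < exp (-1) := by
  have h := add_one_lt_exp (sub_ne_zero.mpr hs)
  have : exp (s - 1) * exp (-s) = exp (-1) := by rw [← exp_add]; ring_nf
  nlinarith [exp_pos (-s)]

lemma monotoneOn_mul_exp_neg : MonotoneOn (fun s => s * exp (-s)) (Set.Icc 0 1) := by
  intro a ha b hb hab
  replace ha := ha.1
  replace hb := hb.2
  have h : a ≤ b * exp (a - b) := by
    nlinarith [add_one_le_exp (a - b), mul_nonneg (sub_nonneg.mpr hab) (sub_nonneg.mpr hb)]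
  calc a * exp (-a) ≤ b * exp (a - b) * exp (-a) := by gcongr
    _ = b * exp (-b) := by rw [mul_assoc, ← exp_add]; ring_nf

lemma exp_one_mul_abs_mul_exp_neg_lt_one {s : ℝ} (h0 : 0 ≤ s) (h1 : s < 1) :
    exp 1 * |s * exp (-s)| < 1 := by
  calc exp 1 * |s * exp (-s)| < exp 1 * exp (-1) := by
        rw [abs_of_nonneg (by positivity)]; gcongr; exact mul_exp_neg_lt_exp_neg_one h1.ne
    _ = 1 := by rw [← exp_add, add_neg_cancel, exp_zero]

noncomputable def borelCoeff (m : ℕ) : ℝ := ((m : ℝ) + 1) ^ (m - 1) / m !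

lemma borelCoeff_nonneg (m : ℕ) : 0 ≤ borelCoeff m := by unfold borelCoeff; positivity

lemma add_one_mul_borelCoeff (m : ℕ) :
    ((m : ℝ) + 1) * borelCoeff m = ((m : ℝ) + 1) ^ m / m ! := by
  rcases m with _ | m
  · simp [borelCoeff]
  · rw [borelCoeff, mul_div_assoc', ← pow_succ', Nat.add_sub_cancel]

lemma add_one_mul_borelCoeff_succ (n : ℕ) :
    ((n : ℝ) + 1) * borelCoeff (n + 1) = ((n : ℝ) + 2) ^ n / n ! := by
  rw [borelCoeff, Nat.factorial_succ, Nat.add_sub_cancel]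
  push_cast
  field_simp
  ring

lemma add_one_mul_borelCoeff_le (m : ℕ) :
    ((m : ℝ) + 1) * borelCoeff m ≤ exp 1 * exp 1 ^ m := by
  rw [add_one_mul_borelCoeff, ← pow_succ', ← exp_nat_mul, Nat.cast_succ, mul_one]
  exact pow_div_factorial_le_exp _ (by positivity) m

lemma abs_borelCoeff_le (m : ℕ) : |borelCoeff m| ≤ exp 1 * exp 1 ^ m := by
  rw [abs_of_nonneg (borelCoeff_nonneg m)]
  refine le_trans ?_ (add_one_mul_borelCoeff_le m)
  exact le_mul_of_one_le_left (borelCoeff_nonneg m) (by linarith [m.cast_nonneg (α := ℝ)])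

lemma sum_range_borelCoeff_mul (n : ℕ) :
    ∑ k ∈ range (n + 1), borelCoeff k * ((((n - k : ℕ) : ℝ) + 1) * borelCoeff (n - k))
      = ((n : ℝ) + 1) * borelCoeff (n + 1) := by
  have habel := sum_choose_mul_add_one_pow_mul_sub_pow n ((n : ℝ) + 1)
  rw [show (n : ℝ) + 1 + 1 = n + 2 by ring] at habel
  rw [add_one_mul_borelCoeff_succ, ← habel, sum_div]
  refine sum_congr rfl fun k hk => ?_
  have hk : k ≤ n := Nat.lt_succ_iff.mp (mem_range.mp hk)
  have hchoose : (n.choose k : ℝ) * k ! * (n - k)! = n ! := by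
    exact_mod_cast Nat.choose_mul_factorial_mul_factorial hk
  rw [add_one_mul_borelCoeff, borelCoeff, Nat.cast_sub hk,
    show (n : ℝ) - k + 1 = n + 1 - k by ring]
  field_simp
  rw [← hchoose]
  ring

lemma abs_add_one_mul_borelCoeff_le (m : ℕ) :
    |((m : ℝ) + 1) * borelCoeff m| ≤ exp 1 * exp 1 ^ m := by
  rw [abs_of_nonneg (by have := borelCoeff_nonneg m; positivity)]
  exact add_one_mul_borelCoeff_le m

lemma abs_add_one_mul_borelCoeff_succ_le (n : ℕ) :
    |((n : ℝ) + 1) * borelCoeff (n + 1)| ≤ exp 1 ^ 2 * exp 1 ^ n := by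
  have hc := borelCoeff_nonneg (n + 1)
  rw [abs_of_nonneg (by positivity)]
  calc ((n : ℝ) + 1) * borelCoeff (n + 1) ≤ ((n + 1 : ℕ) + 1) * borelCoeff (n + 1) := by
        gcongr; linarith
    _ ≤ exp 1 ^ 2 * exp 1 ^ n := by
        rw [sq, mul_assoc, ← pow_succ']; exact add_one_mul_borelCoeff_le (n + 1)

noncomputable def borelSeries (x : ℝ) : ℝ := ∑' m, borelCoeff m * x ^ m

lemma borelSeries_zero : borelSeries 0 = 1 := by
  rw [borelSeries, tsum_eq_single 0 fun m hm => by simp [hm]]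
  simp [borelCoeff]

section Convergence

variable {x : ℝ}

lemma hasDerivAt_borelSeries (hx : exp 1 * |x| < 1) :
    HasDerivAt borelSeries (∑' m, m * borelCoeff m * x ^ (m - 1)) x :=
  hasDerivAt_tsum_mul_pow (exp_pos 1).le abs_borelCoeff_le hx

lemma deriv_borelSeries (hx : exp 1 * |x| < 1) :
    deriv borelSeries x = ∑' n : ℕ, ((n : ℝ) + 1) * borelCoeff (n + 1) * x ^ n := by
  have hshift : Summable fun n : ℕ => ((n : ℝ) + 1) * borelCoeff (n + 1) * x ^ n :=
    (summable_norm_mul_pow_of_abs_le (exp_pos 1).le abs_add_one_mul_borelCoeff_succ_le hx).of_norm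
  rw [(hasDerivAt_borelSeries hx).deriv, tsum_eq_zero_add' (by simpa using hshift)]
  simp

lemma tsum_add_one_mul_borelCoeff_mul_pow (hx : exp 1 * |x| < 1) :
    ∑' m : ℕ, ((m : ℝ) + 1) * borelCoeff m * x ^ m
      = borelSeries x + x * deriv borelSeries x := by
  have hderiv : x * deriv borelSeries x
      = ∑' m : ℕ, (((m : ℝ) + 1) * borelCoeff m * x ^ m - borelCoeff m * x ^ m) := by
    rw [(hasDerivAt_borelSeries hx).deriv, ← tsum_mul_left]
    refine tsum_congr fun m => ?_
    rcases m with _ | m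
    · simp
    · rw [Nat.add_sub_cancel, pow_succ]; push_cast; ring
  rw [hderiv, Summable.tsum_sub
    (summable_norm_mul_pow_of_abs_le (exp_pos 1).le abs_add_one_mul_borelCoeff_le hx).of_norm
    (summable_norm_mul_pow_of_abs_le (exp_pos 1).le abs_borelCoeff_le hx).of_norm, borelSeries]
  ring

lemma borelSeries_mul_tsum_add_one_mul_borelCoeff_mul_pow (hx : exp 1 * |x| < 1) :
    borelSeries x * ∑' m : ℕ, ((m : ℝ) + 1) * borelCoeff m * x ^ m = deriv borelSeries x := by
  rw [borelSeries, tsum_mul_tsum_eq_tsum_sum_range_of_summable_norm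
    (summable_norm_mul_pow_of_abs_le (exp_pos 1).le abs_borelCoeff_le hx)
    (summable_norm_mul_pow_of_abs_le (exp_pos 1).le abs_add_one_mul_borelCoeff_le hx),
    deriv_borelSeries hx]
  refine tsum_congr fun n => ?_
  rw [← sum_range_borelCoeff_mul, sum_mul]
  refine sum_congr rfl fun k hk => ?_
  rw [← pow_mul_pow_sub x (Nat.lt_succ_iff.mp (mem_range.mp hk))]
  ring

lemma borelSeries_mul_add_deriv (hx : exp 1 * |x| < 1) :
    borelSeries x * (borelSeries x + x * deriv borelSeries x) = deriv borelSeries x := by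
  rw [← tsum_add_one_mul_borelCoeff_mul_pow hx,
    borelSeries_mul_tsum_add_one_mul_borelCoeff_mul_pow hx]

end Convergence

lemma hasDerivAt_exp_neg_mul_borelSeries_sub_one {s : ℝ} (h0 : 0 ≤ s) (h1 : s < 1) :
    HasDerivAt (fun s => exp (-s) * borelSeries (s * exp (-s)) - 1)
      (exp (-s) * (∑' m : ℕ, ((m : ℝ) + 1) * borelCoeff m * (s * exp (-s)) ^ m) *
        (exp (-s) * borelSeries (s * exp (-s)) - 1)) s := by
  have hx := exp_one_mul_abs_mul_exp_neg_lt_one h0 h1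
  have hF : HasDerivAt borelSeries (deriv borelSeries (s * exp (-s))) (s * exp (-s)) :=
    (hasDerivAt_borelSeries hx).differentiableAt.hasDerivAt
  have hexp : HasDerivAt (fun s => exp (-s)) (-exp (-s)) s := by
    simpa using (hasDerivAt_neg s).exp
  refine ((hexp.mul (hF.comp s ((hasDerivAt_id' s).mul hexp))).sub_const 1).congr_deriv ?_
  rw [tsum_add_one_mul_borelCoeff_mul_pow hx, Function.comp_apply]
  linear_combination -exp (-s) ^ 2 * borelSeries_mul_add_deriv hx

lemma norm_exp_neg_mul_tsum_add_one_mul_borelCoeff_mul_pow_le {s θ : ℝ}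
    (hs : s ∈ Set.Icc 0 θ) (hθ : θ < 1) :
    ‖exp (-s) * ∑' m : ℕ, ((m : ℝ) + 1) * borelCoeff m * (s * exp (-s)) ^ m‖
      ≤ ∑' m : ℕ, ((m : ℝ) + 1) * borelCoeff m * (θ * exp (-θ)) ^ m := by
  obtain ⟨hs0, hsθ⟩ := hs
  have hcoeff : ∀ m : ℕ, 0 ≤ ((m : ℝ) + 1) * borelCoeff m := fun m => by
    have := borelCoeff_nonneg m; positivity
  have hG : 0 ≤ ∑' m : ℕ, ((m : ℝ) + 1) * borelCoeff m * (s * exp (-s)) ^ m :=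
    tsum_nonneg fun m => by have := hcoeff m; positivity
  rw [Real.norm_of_nonneg (by positivity)]
  calc exp (-s) * ∑' m : ℕ, ((m : ℝ) + 1) * borelCoeff m * (s * exp (-s)) ^ m
      ≤ ∑' m : ℕ, ((m : ℝ) + 1) * borelCoeff m * (s * exp (-s)) ^ m :=
        mul_le_of_le_one_left hG (exp_le_one_iff.mpr (by linarith))
    _ ≤ ∑' m : ℕ, ((m : ℝ) + 1) * borelCoeff m * (θ * exp (-θ)) ^ m :=
        tsum_mul_pow_le_tsum_mul_pow hcoeff
          (summable_norm_mul_pow_of_abs_le (exp_pos 1).le abs_add_one_mul_borelCoeff_le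
            (exp_one_mul_abs_mul_exp_neg_lt_one (hs0.trans hsθ) hθ)).of_norm
          (by positivity)
          (monotoneOn_mul_exp_neg ⟨hs0, by linarith⟩ ⟨hs0.trans hsθ, hθ.le⟩ hsθ)

lemma exp_neg_mul_borelSeries_eq_one_of_lt {θ : ℝ} (h0 : 0 ≤ θ) (h1 : θ < 1) :
    exp (-θ) * borelSeries (θ * exp (-θ)) = 1 := by
  have hderiv := fun s (hs : s ∈ Set.Icc 0 θ) =>
    hasDerivAt_exp_neg_mul_borelSeries_sub_one hs.1 (hs.2.trans_lt h1)
  have := eq_zero_of_abs_deriv_le_mul_abs_self_of_eq_zero_right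
    (fun s hs => (hderiv s hs).continuousAt.continuousWithinAt)
    (fun s hs => (hderiv s (Set.Ico_subset_Icc_self hs)).hasDerivWithinAt)
    (by simp [borelSeries_zero])
    (fun s hs => by
      rw [norm_mul]
      gcongr
      exact norm_exp_neg_mul_tsum_add_one_mul_borelCoeff_mul_pow_le
        (Set.Ico_subset_Icc_self hs) h1) θ ⟨h0, le_rfl⟩
  exact sub_eq_zero.mp this

lemma summable_borelCoeff_mul_exp_neg_one_pow :
    Summable fun m => borelCoeff m * exp (-1) ^ m := by
  refine summable_of_sum_range_le (c := exp 1)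
    (fun m => mul_nonneg (borelCoeff_nonneg m) (by positivity)) fun N => ?_
  have hcont : Continuous fun θ => ∑ m ∈ range N, borelCoeff m * (θ * exp (-θ)) ^ m := by
    fun_prop
  have hbound : ∀ θ ∈ Set.Ioo (0 : ℝ) 1,
      ∑ m ∈ range N, borelCoeff m * (θ * exp (-θ)) ^ m ≤ exp 1 := by
    intro θ ⟨h0, h1⟩
    have hx := exp_one_mul_abs_mul_exp_neg_lt_one h0.le h1
    calc ∑ m ∈ range N, borelCoeff m * (θ * exp (-θ)) ^ m ≤ borelSeries (θ * exp (-θ)) :=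
          Summable.sum_le_tsum _ (fun m _ => by have := borelCoeff_nonneg m; positivity)
            (summable_norm_mul_pow_of_abs_le (exp_pos 1).le abs_borelCoeff_le hx).of_norm
      _ = exp θ * (exp (-θ) * borelSeries (θ * exp (-θ))) := by
          rw [← mul_assoc, ← exp_add, add_neg_cancel, exp_zero, one_mul]
      _ = exp θ := by rw [exp_neg_mul_borelSeries_eq_one_of_lt h0.le h1, mul_one]
      _ ≤ exp 1 := exp_le_exp.mpr h1.le
  have hlim := (hcont.tendsto 1).mono_left (nhdsWithin_le_nhds (s := Set.Iio 1))
  simpa using le_of_tendsto hlim (eventually_of_mem (Ioo_mem_nhdsLT one_pos) hbound)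

lemma continuousOn_exp_neg_mul_borelSeries :
    ContinuousOn (fun θ => exp (-θ) * borelSeries (θ * exp (-θ))) (Set.Icc 0 1) := by
  refine (continuous_exp.comp continuous_neg).continuousOn.mul ?_
  refine continuousOn_tsum (fun m => by fun_prop) summable_borelCoeff_mul_exp_neg_one_pow
    fun m θ hθ => ?_
  have hx : 0 ≤ θ * exp (-θ) := mul_nonneg hθ.1 (exp_pos _).le
  rw [norm_mul, norm_pow, Real.norm_of_nonneg (borelCoeff_nonneg m), Real.norm_of_nonneg hx]
  exact mul_le_mul_of_nonneg_left (pow_le_pow_left₀ hx (mul_exp_neg_le_exp_neg_one θ) m)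
    (borelCoeff_nonneg m)

lemma exp_neg_mul_borelSeries_eq_one {θ : ℝ} (hθ : θ ∈ Set.Icc (0 : ℝ) 1) :
    exp (-θ) * borelSeries (θ * exp (-θ)) = 1 :=
  Set.EqOn.of_subset_closure (fun _ hθ => exp_neg_mul_borelSeries_eq_one_of_lt hθ.1 hθ.2)
    continuousOn_exp_neg_mul_borelSeries continuousOn_const Set.Ico_subset_Icc_self
    (closure_Ico zero_ne_one).ge hθ

lemma borelCoeff_eq_zpow_div (m : ℕ) :
    borelCoeff m = ((m : ℝ) + 1) ^ ((m : ℤ) - 1) / m ! := by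
  rcases m with _ | m
  · simp [borelCoeff]
  · rw [borelCoeff, Nat.add_sub_cancel, show ((m + 1 : ℕ) : ℤ) - 1 = m by push_cast; ring,
      zpow_natCast]

theorem stmt_6 (θ : ℝ) (hθ0 : 0 < θ) (hθ1 : θ ≤ 1) :
    ∑' m : ℕ, ((m : ℝ) + 1) ^ ((m : ℤ) - 1) * θ ^ m *
      Real.exp (-((m : ℝ) + 1) * θ) / m.factorial = 1 := by
  have hterm : ∀ m : ℕ, ((m : ℝ) + 1) ^ ((m : ℤ) - 1) * θ ^ m *
      Real.exp (-((m : ℝ) + 1) * θ) / m.factorial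
        = exp (-θ) * (borelCoeff m * (θ * exp (-θ)) ^ m) := fun m => by
    rw [borelCoeff_eq_zpow_div, mul_pow, ← exp_nat_mul,
      show -((m : ℝ) + 1) * θ = -θ + m * -θ by ring, exp_add]
    ring
  rw [tsum_congr hterm, tsum_mul_left]
  exact exp_neg_mul_borelSeries_eq_one ⟨hθ0.le, hθ1⟩
end

section
/- Let T be a nonnegative random variable with E[e^{-λT}] = c_λ/b_λ for all λ > 0, where b_λ, c_λ are as in the drawdown setting for a drifted Brownian motion with μ ≠ 0. Then E[T] = (σ²e^{2μa/σ²} − σ² − 2μa)/(2μ²), obtained as −d/dλ (c_λ/b_λ) at λ = 0+. -/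
/-!
For `T ≥ 0` the quotients `(1 - exp (-λ T)) / λ` increase to `T` as `λ ↓ 0`, by convexity of
`λ ↦ exp (-λ T)`; monotone convergence turns this into `E[T] = lim (1 - E[exp (-λ T)]) / λ`, minus
the right derivative at `0` of the Laplace transform. With `s = √(μ² + 2λσ²)` the transform
`c_λ / b_λ` is a smooth function of `s`, hence of `λ` near `0`, equal to `1` at `λ = 0`, and the
chain rule gives its derivative there.
-/

open Real Filter MeasureTheory Topology Set

lemma tendsto_one_sub_div_of_hasDerivAt {f : ℝ → ℝ} {f' : ℝ} (hf : HasDerivAt f f' 0)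
    (h0 : f 0 = 1) : Tendsto (fun x => (1 - f x) / x) (𝓝[≠] 0) (𝓝 (-f')) :=
  (hasDerivAt_iff_tendsto_slope.1 hf).neg.congr fun x => by
    rw [slope_def_field, h0, sub_zero, ← neg_div, neg_sub]

lemma convexOn_exp_neg_mul (t : ℝ) : ConvexOn ℝ univ fun x => exp (-x * t) := by
  have h := convexOn_exp.comp_linearMap ((-t) • LinearMap.id (R := ℝ) (M := ℝ))
  rw [preimage_univ] at h
  exact h.congr fun x _ => by simp [mul_comm]

lemma antitoneOn_one_sub_exp_neg_mul_div (t : ℝ) :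
    AntitoneOn (fun x => (1 - exp (-x * t)) / x) (Ioi 0) := by
  intro x hx y hy hxy
  have := ((convexOn_exp_neg_mul t).slope_mono (mem_univ 0)).neg
    ⟨mem_univ x, hx.ne'⟩ ⟨mem_univ y, hy.ne'⟩ hxy
  simpa [slope_def_field, ← neg_div] using this

lemma tendsto_one_sub_exp_neg_mul_div (t : ℝ) :
    Tendsto (fun x => (1 - exp (-x * t)) / x) (𝓝[≠] 0) (𝓝 t) := by
  have hf : HasDerivAt (fun x => exp (-x * t)) (-t) 0 := by
    simpa using ((hasDerivAt_id (0 : ℝ)).neg.mul_const t).exp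
  simpa using tendsto_one_sub_div_of_hasDerivAt hf (by simp)

section LaplaceTransform

variable {Ω : Type*} [MeasurableSpace Ω] {P : Measure Ω} {T : Ω → ℝ} {lam : ℝ}

lemma integrable_exp_neg_mul [IsFiniteMeasure P] (hT : AEMeasurable T P) (hT0 : 0 ≤ᵐ[P] T)
    (hlam : 0 ≤ lam) : Integrable (fun ω => exp (-lam * T ω)) P :=
  .of_bound (by fun_prop) 1 <| hT0.mono fun ω hω => by
    rw [norm_of_nonneg (exp_pos _).le, exp_le_one_iff]
    exact mul_nonpos_of_nonpos_of_nonneg (neg_nonpos.2 hlam) hω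

lemma integral_one_sub_exp_neg_mul_div [IsProbabilityMeasure P] (hT : AEMeasurable T P)
    (hT0 : 0 ≤ᵐ[P] T) (hlam : 0 ≤ lam) :
    ∫ ω, (1 - exp (-lam * T ω)) / lam ∂P = (1 - ∫ ω, exp (-lam * T ω) ∂P) / lam := by
  rw [integral_div, integral_sub (integrable_const 1) (integrable_exp_neg_mul hT hT0 hlam)]
  simp

theorem integral_eq_of_tendsto_one_sub_integral_exp_neg_mul_div [IsProbabilityMeasure P]
    (hT : AEMeasurable T P) (hT0 : 0 ≤ᵐ[P] T) {L : ℝ}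
    (hL : Tendsto (fun lam => (1 - ∫ ω, exp (-lam * T ω) ∂P) / lam) (𝓝[>] 0) (𝓝 L)) :
    ∫ ω, T ω ∂P = L := by
  set g : ℝ → Ω → ℝ := fun lam ω => (1 - exp (-lam * T ω)) / lam
  have hg_nonneg : ∀ lam > 0, 0 ≤ᵐ[P] g lam := fun lam hlam => hT0.mono fun ω hω =>
    div_nonneg (sub_nonneg.2 (exp_le_one_iff.2
      (mul_nonpos_of_nonpos_of_nonneg (neg_nonpos.2 hlam.le) hω))) hlam.le
  have hL0 : 0 ≤ L := ge_of_tendsto hL <| eventually_mem_nhdsWithin.mono fun lam hlam => by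
    rw [← integral_one_sub_exp_neg_mul_div hT hT0 (le_of_lt hlam)]
    exact integral_nonneg_of_ae (hg_nonneg lam hlam)
  set lamSeq : ℕ → ℝ := fun n => 1 / (n + 1)
  have hlamSeq_pos : ∀ n, 0 < lamSeq n := fun n => by positivity
  have hlamSeq : Tendsto lamSeq atTop (𝓝[>] 0) :=
    tendsto_nhdsWithin_of_tendsto_nhds_of_eventually_within _
      tendsto_one_div_add_atTop_nhds_zero_nat (.of_forall hlamSeq_pos)
  have hlamSeq_anti : Antitone lamSeq := fun m n hmn =>
    one_div_le_one_div_of_le (by positivity) (by gcongr)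
  have hmono : Tendsto (fun n => ∫⁻ ω, .ofReal (g (lamSeq n) ω) ∂P) atTop
      (𝓝 (∫⁻ ω, .ofReal (T ω) ∂P)) := by
    refine lintegral_tendsto_of_tendsto_of_monotone (fun n => by fun_prop)
      (ae_of_all _ fun ω m n hmn => ENNReal.ofReal_le_ofReal ?_)
      (ae_of_all _ fun ω => (ENNReal.continuous_ofReal.tendsto _).comp ?_)
    · exact antitoneOn_one_sub_exp_neg_mul_div (T ω) (hlamSeq_pos n) (hlamSeq_pos m)
        (hlamSeq_anti hmn)
    · exact (tendsto_one_sub_exp_neg_mul_div (T ω)).comp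
        (hlamSeq.mono_right (nhdsWithin_mono _ fun x hx => ne_of_gt hx))
  have hlim : Tendsto (fun n => ∫⁻ ω, .ofReal (g (lamSeq n) ω) ∂P) atTop
      (𝓝 (.ofReal L)) := by
    refine ((ENNReal.continuous_ofReal.tendsto L).comp (hL.comp hlamSeq)).congr fun n => ?_
    rw [Function.comp_apply, Function.comp_apply,
      ← integral_one_sub_exp_neg_mul_div hT hT0 (hlamSeq_pos n).le,
      ofReal_integral_eq_lintegral_ofReal _ (hg_nonneg _ (hlamSeq_pos n))]
    exact ((integrable_const 1).sub
      (integrable_exp_neg_mul hT hT0 (hlamSeq_pos n).le)).div_const _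
  rw [integral_eq_lintegral_of_nonneg_ae hT0 hT.aestronglyMeasurable,
    tendsto_nhds_unique hmono hlim, ENNReal.toReal_ofReal hL0]

end LaplaceTransform

noncomputable def drawdownDenom (μ σ a s : ℝ) : ℝ :=
  (s - μ) * exp ((μ + s) * a / σ ^ 2) + (s + μ) * exp ((μ - s) * a / σ ^ 2)

/-- For `λ > 0` this is `c_λ / b_λ`: with `s = √(μ² + 2λσ²)` one has `β± = (-μ ± s) / σ²`, hence
`σ² (β⁺ - β⁻) = 2 s` and `σ² (β⁺ e^{-β⁻ a} - β⁻ e^{-β⁺ a}) = drawdownDenom μ σ a s`. -/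
noncomputable def drawdownLaplace (μ σ a lam : ℝ) : ℝ :=
  2 * √(μ ^ 2 + 2 * lam * σ ^ 2) / drawdownDenom μ σ a √(μ ^ 2 + 2 * lam * σ ^ 2)

section Drawdown

variable {μ σ a s : ℝ}

lemma drawdownDenom_of_sq_eq (h : s ^ 2 = μ ^ 2) : drawdownDenom μ σ a s = 2 * s := by
  rcases sq_eq_sq_iff_eq_or_eq_neg.1 h with rfl | rfl <;> simp [drawdownDenom] <;> ring

lemma hasDerivAt_drawdownDenom (μ σ a s : ℝ) :
    HasDerivAt (drawdownDenom μ σ a)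
      (exp ((μ + s) * a / σ ^ 2) * (1 + (s - μ) * a / σ ^ 2) +
        exp ((μ - s) * a / σ ^ 2) * (1 - (s + μ) * a / σ ^ 2)) s := by
  have hp : HasDerivAt (fun x => (μ + x) * a / σ ^ 2) (a / σ ^ 2) s := by
    simpa using (((hasDerivAt_id s).const_add μ).mul_const a).div_const (σ ^ 2)
  have hm : HasDerivAt (fun x => (μ - x) * a / σ ^ 2) (-(a / σ ^ 2)) s := by
    simpa [neg_div] using (((hasDerivAt_id s).const_sub μ).mul_const a).div_const (σ ^ 2)
  refine ((((hasDerivAt_id s).sub_const μ).mul hp.exp).add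
    (((hasDerivAt_id s).add_const μ).mul hm.exp)).congr_deriv ?_
  rw [id]
  ring

lemma hasDerivAt_drawdownDenom_of_sq_eq (h : s ^ 2 = μ ^ 2) :
    HasDerivAt (drawdownDenom μ σ a) (exp (2 * μ * a / σ ^ 2) + 1 - 2 * μ * a / σ ^ 2) s := by
  refine (hasDerivAt_drawdownDenom μ σ a s).congr_deriv ?_
  rcases sq_eq_sq_iff_eq_or_eq_neg.1 h with rfl | rfl <;> simp <;> ring_nf

lemma drawdownLaplace_zero (hμ : μ ≠ 0) : drawdownLaplace μ σ a 0 = 1 := by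
  simp [drawdownLaplace, sqrt_sq_eq_abs, drawdownDenom_of_sq_eq (sq_abs μ), hμ]

lemma hasDerivAt_drawdownLaplace_zero (hμ : μ ≠ 0) (hσ : σ ≠ 0) :
    HasDerivAt (drawdownLaplace μ σ a)
      (-((σ ^ 2 * exp (2 * μ * a / σ ^ 2) - σ ^ 2 - 2 * μ * a) / (2 * μ ^ 2))) 0 := by
  have hs0 : √(μ ^ 2 + 2 * 0 * σ ^ 2) = |μ| := by simp [sqrt_sq_eq_abs]
  have hs : HasDerivAt (fun lam => √(μ ^ 2 + 2 * lam * σ ^ 2)) (σ ^ 2 / |μ|) 0 := by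
    refine ((((hasDerivAt_id (0 : ℝ)).const_mul 2).mul_const (σ ^ 2)).const_add
      (μ ^ 2)).sqrt (by simp [hμ]) |>.congr_deriv ?_
    rw [id, hs0]; field_simp
  have hD := (hasDerivAt_drawdownDenom_of_sq_eq (σ := σ) (a := a) (sq_abs μ)).comp_of_eq 0 hs
    hs0.symm
  have hD0 : drawdownDenom μ σ a |μ| = 2 * |μ| := drawdownDenom_of_sq_eq (sq_abs μ)
  refine ((hs.const_mul 2).div hD (by rw [Function.comp_apply, hs0, hD0]; simp [hμ]))
    |>.congr_deriv ?_
  rw [Function.comp_apply, hs0, hD0]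
  have habs := abs_pos.2 hμ
  field_simp
  rw [sq_abs]
  ring

lemma drawdown_ratio_eq {βp βm : ℝ} (hσ : σ ≠ 0) (ha : a ≠ 0) (hs : s ≠ 0)
    (hβp : βp = (-μ + s) / σ ^ 2) (hβm : βm = (-μ - s) / σ ^ 2) :
    (βp - βm) / (exp (-βm * a) - exp (-βp * a)) /
        ((βp * exp (-βm * a) - βm * exp (-βp * a)) / (exp (-βm * a) - exp (-βp * a))) =
      2 * s / drawdownDenom μ σ a s := by
  have hm : -βm * a = (μ + s) * a / σ ^ 2 := by rw [hβm]; ring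
  have hp : -βp * a = (μ - s) * a / σ ^ 2 := by rw [hβp]; ring
  have hE : exp (-βm * a) - exp (-βp * a) ≠ 0 := by
    rw [sub_ne_zero, Ne, exp_eq_exp, hm, hp, div_left_inj' (pow_ne_zero 2 hσ),
      mul_left_inj' ha]
    intro h
    exact hs (by linarith)
  have hnum : βp - βm = 2 * s / σ ^ 2 := by rw [hβp, hβm]; ring
  have hden : βp * exp (-βm * a) - βm * exp (-βp * a) = drawdownDenom μ σ a s / σ ^ 2 := by
    rw [hm, hp, hβp, hβm, drawdownDenom]; ring
  rw [div_div_div_cancel_right₀ hE, hnum, hden, div_div_div_cancel_right₀ (pow_ne_zero 2 hσ)]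

end Drawdown

theorem stmt_10 {Ω : Type*} [MeasureSpace Ω] (P : MeasureTheory.Measure Ω)
    [MeasureTheory.IsProbabilityMeasure P]
    (μ σ a : ℝ) (hμ : μ ≠ 0) (hσ : 0 < σ) (ha : 0 < a)
    (βp βm b c : ℝ → ℝ)
    (hβp : ∀ lam, βp lam = (-μ + Real.sqrt (μ ^ 2 + 2 * lam * σ ^ 2)) / σ ^ 2)
    (hβm : ∀ lam, βm lam = (-μ - Real.sqrt (μ ^ 2 + 2 * lam * σ ^ 2)) / σ ^ 2)
    (hb : ∀ lam, b lam = (βp lam * Real.exp (-(βm lam) * a) - βm lam * Real.exp (-(βp lam) * a)) /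
      (Real.exp (-(βm lam) * a) - Real.exp (-(βp lam) * a)))
    (hc : ∀ lam, c lam = (βp lam - βm lam) /
      (Real.exp (-(βm lam) * a) - Real.exp (-(βp lam) * a)))
    (T : Ω → ℝ) (hTmeas : Measurable T) (hTnn : ∀ ω, 0 ≤ T ω)
    (hLT : ∀ lam > 0, ∫ ω, Real.exp (-lam * T ω) ∂P = c lam / b lam) :
    (∫ ω, T ω ∂P = (σ ^ 2 * Real.exp (2 * μ * a / σ ^ 2) - σ ^ 2 - 2 * μ * a) / (2 * μ ^ 2)) ∧
    Tendsto (fun lam => (1 - c lam / b lam) / lam) (nhdsWithin 0 (Set.Ioi 0))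
      (nhds ((σ ^ 2 * Real.exp (2 * μ * a / σ ^ 2) - σ ^ 2 - 2 * μ * a) / (2 * μ ^ 2))) := by
  have hLaplace : ∀ lam > 0, drawdownLaplace μ σ a lam = c lam / b lam := fun lam hlam => by
    rw [hc, hb, drawdownLaplace]
    exact (drawdown_ratio_eq hσ.ne' ha.ne' (sqrt_pos.2 (by positivity)).ne' (hβp lam)
      (hβm lam)).symm
  have hslope : Tendsto (fun lam => (1 - c lam / b lam) / lam) (𝓝[>] 0)
      (𝓝 ((σ ^ 2 * exp (2 * μ * a / σ ^ 2) - σ ^ 2 - 2 * μ * a) / (2 * μ ^ 2))) := by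
    have h := tendsto_one_sub_div_of_hasDerivAt (hasDerivAt_drawdownLaplace_zero (a := a) hμ
      hσ.ne') (drawdownLaplace_zero hμ)
    rw [neg_neg] at h
    exact (h.mono_left (nhdsWithin_mono _ fun x hx => ne_of_gt hx)).congr'
      (eventually_mem_nhdsWithin.mono fun lam hlam => by rw [hLaplace lam hlam])
  refine ⟨integral_eq_of_tendsto_one_sub_integral_exp_neg_mul_div hTmeas.aemeasurable
    (ae_of_all _ hTnn) ?_, hslope⟩
  exact hslope.congr' <| eventually_mem_nhdsWithin.mono fun lam hlam => by
    simp only [hLT lam hlam]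
end
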